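/- Let X be a convex subset of a uniformly convex real normed space, let K be a finite index set with at least two elements, and let (P_k)_{k∈K} be nonempty subsets of X such that d(P_j, P_k) > 0 for all j ≠ k. Fix k ∈ K and let R_k = dom(P_k, ⋃_{j≠k} P_j) be the Voronoi cell of P_k. Then a point x ∈ X lies on the boundary of R_k with respect to the subspace topology on X if and only if d(x, P_k) ≤ d(x, P_j) for every j ≠ k and d(x, P_k) = d(x, P_j) for at least one j ≠ k. -/
import Mathlib



set_option maxHeartbeats 1000000

open Metric

lemma le_infDist_aux {α : Type*} [PseudoMetricSpace α] {s : Set α} (hs : s.Nonempty)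
    {x : α} {b : ℝ} (h : ∀ y ∈ s, b ≤ dist x y) : b ≤ infDist x s := by
  by_contra hlt
  obtain ⟨y, hy, hd⟩ := (infDist_lt_iff hs).1 (lt_of_not_ge hlt)
  exact absurd (h y hy) (not_le.2 hd)

lemma voronoi_key {E : Type*} [NormedAddCommGroup E] [NormedSpace ℝ E] [UniformConvexSpace E]
    (Pk Pj : Set E) (hk : Pk.Nonempty) (hj : Pj.Nonempty) {S : ℝ} (hS : 0 < S)
    (hsep : ∀ p ∈ Pk, ∀ a ∈ Pj, S ≤ dist p a) (x : E)
    (heq : infDist x Pk = infDist x Pj) {ε' : ℝ} (hε' : 0 < ε') :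
    ∃ a ∈ Pj, ∃ t : ℝ, 0 ≤ t ∧ t ≤ 1 ∧ dist ((1-t) • x + t • a) x < ε' ∧
      infDist ((1-t) • x + t • a) Pj < infDist ((1-t) • x + t • a) Pk := by
  set d := infDist x Pk with hd_def
  have hdj : infDist x Pj = d := heq.symm
  have hS2d : S ≤ 2 * d := by
    have h1 : S - infDist x Pj ≤ infDist x Pk := by
      refine le_infDist_aux hk fun p hp => ?_
      have h2 : S - dist x p ≤ infDist x Pj := by
        refine le_infDist_aux hj fun a ha => ?_
        have h3 := hsep p hp a ha
        have htri := dist_triangle p x a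
        rw [dist_comm p x] at htri
        linarith
      linarith
    rw [hdj] at h1; linarith
  have hd : 0 < d := by linarith
  have hε₀ : 0 < S / (d + S) := div_pos hS (by linarith)
  obtain ⟨δ₀, hδ₀, hball⟩ := exists_forall_closed_ball_dist_add_le_two_sub E hε₀
  set δ := min δ₀ 1 with hδ_def
  have hδpos : 0 < δ := lt_min hδ₀ one_pos
  have hδ1 : δ ≤ 1 := min_le_right _ _
  have hballδ : ∀ ⦃u : E⦄, ‖u‖ ≤ 1 → ∀ ⦃v⦄, ‖v‖ ≤ 1 → S / (d + S) ≤ ‖u - v‖ →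
      ‖u + v‖ ≤ 2 - δ := fun u hu v hv huv =>
    (hball hu hv huv).trans (by have := min_le_left δ₀ 1; simp only [hδ_def]; linarith)
  set t := min (min (1/2) (S/(8*d))) (min (δ/16) (ε'/(4*d))) with ht_def
  have ht0 : 0 < t :=
    lt_min (lt_min one_half_pos (by positivity)) (lt_min (by positivity) (by positivity))
  have ht_half : t ≤ 1/2 := le_trans (min_le_left _ _) (min_le_left _ _)
  have ht_S : t * (8*d) ≤ S := by
    have h := mul_le_mul_of_nonneg_right (le_trans (min_le_left _ _) (min_le_right _ _) :
      t ≤ S/(8*d)) (show (0:ℝ) ≤ 8*d by positivity)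
    rwa [div_mul_cancel₀ _ (show (8:ℝ)*d ≠ 0 by positivity)] at h
  have ht_δ : t ≤ δ/16 := le_trans (min_le_right _ _) (min_le_left _ _)
  have ht_ε' : t * (4*d) ≤ ε' := by
    have h := mul_le_mul_of_nonneg_right (le_trans (min_le_right _ _) (min_le_right _ _) :
      t ≤ ε'/(4*d)) (show (0:ℝ) ≤ 4*d by positivity)
    rwa [div_mul_cancel₀ _ (show (4:ℝ)*d ≠ 0 by positivity)] at h
  set ε := t * δ * d / 4 with hε_def
  have hεpos : 0 < ε := by positivity
  have hεtd : ε ≤ t * d := by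
    have h : t * δ * d ≤ t * 1 * d :=
      mul_le_mul_of_nonneg_right (mul_le_mul_of_nonneg_left hδ1 ht0.le) hd.le
    rw [hε_def]; linarith
  have htd : t * d ≤ d := by
    have h : t * d ≤ 1 * d := mul_le_mul_of_nonneg_right (by linarith) hd.le
    linarith
  have hεd : ε ≤ d := hεtd.trans htd
  have htε : t * ε ≤ t * d := mul_le_mul_of_nonneg_left hεd ht0.le
  have htε0 : 0 ≤ t * ε := by positivity
  obtain ⟨a, haj, hxa⟩ : ∃ a ∈ Pj, dist x a < d + ε := by
    refine (infDist_lt_iff hj).1 ?_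
    rw [hdj]; linarith
  refine ⟨a, haj, t, ht0.le, by linarith, ?_, ?_⟩
  · have hrw : (1-t) • x + t • a - x = t • (a - x) := by
      simp [sub_smul, smul_sub]; abel
    rw [dist_eq_norm, hrw, norm_smul, Real.norm_eq_abs, abs_of_pos ht0]
    have hna : ‖a - x‖ = dist x a := by rw [← dist_eq_norm, dist_comm]
    rw [hna]
    have h1 : t * dist x a < t * (d + ε) := mul_lt_mul_of_pos_left hxa ht0
    have h2 : t * (d + ε) ≤ t * (2*d) := mul_le_mul_of_nonneg_left (by linarith) ht0.le
    have h3 : t * (2*d) ≤ t * (4*d) := mul_le_mul_of_nonneg_left (by linarith) ht0.le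
    linarith
  · set y := (1-t) • x + t • a with hy_def
    have hjy : infDist y Pj < (1-t) * (d + ε) := by
      have h1 : infDist y Pj ≤ dist y a := infDist_le_dist_of_mem haj
      have h2 : dist y a = (1-t) * dist x a := by
        have hrw : y - a = (1-t) • (x - a) := by
          simp [hy_def, sub_smul, smul_sub]; abel
        rw [dist_eq_norm, hrw, norm_smul, Real.norm_eq_abs,
          abs_of_pos (by linarith : (0:ℝ) < 1-t), ← dist_eq_norm]
      have h3 : (1-t) * dist x a < (1-t) * (d + ε) :=
        mul_lt_mul_of_pos_left hxa (by linarith)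
      linarith
    have hky : (1-t) * (d + ε) ≤ infDist y Pk := by
      refine le_infDist_aux hk fun p hp => ?_
      have hr : d ≤ dist x p := infDist_le_dist_of_mem hp
      set r := dist x p with hr_def
      set R := d + 2*t*(d+ε) with hR_def
      have hRpos : 0 < R := by rw [hR_def]; positivity
      have hεR : d + ε ≤ R := by rw [hR_def]; linarith
      have hxy : dist x y = t * dist x a := by
        have hrw : x - y = (-t) • (a - x) := by
          simp [hy_def, sub_smul, smul_sub]; abel
        rw [dist_eq_norm, hrw, norm_smul, Real.norm_eq_abs, abs_of_neg (by linarith : -t < 0)]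
        have hna : ‖a - x‖ = dist x a := by rw [← dist_eq_norm, dist_comm]
        rw [hna]; ring
      rcases le_or_gt R r with hfar | hnear
      · have htri : r ≤ dist x y + dist y p := dist_triangle x y p
        have h5 : t * dist x a ≤ t * (d + ε) := mul_le_mul_of_nonneg_left hxa.le ht0.le
        rw [hxy] at htri
        rw [hR_def] at hfar
        linarith
      · set Pv := p - x with hPv_def
        set Av := a - x with hAv_def
        have hPn : ‖Pv‖ = r := by rw [hPv_def, ← dist_eq_norm, dist_comm]
        have hAn : ‖Av‖ = dist x a := by rw [hAv_def, ← dist_eq_norm, dist_comm]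
        have hu : ‖R⁻¹ • Pv‖ ≤ 1 := by
          rw [norm_smul, Real.norm_eq_abs, abs_of_pos (inv_pos.2 hRpos), hPn,
            inv_mul_eq_div, div_le_one hRpos]
          exact hnear.le
        have hv : ‖R⁻¹ • Av‖ ≤ 1 := by
          rw [norm_smul, Real.norm_eq_abs, abs_of_pos (inv_pos.2 hRpos), hAn,
            inv_mul_eq_div, div_le_one hRpos]
          linarith
        have hsubv : S / (d + S) ≤ ‖R⁻¹ • Pv - R⁻¹ • Av‖ := by
          rw [← smul_sub, norm_smul, Real.norm_eq_abs, abs_of_pos (inv_pos.2 hRpos)]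
          have hrw : Pv - Av = p - a := by rw [hPv_def, hAv_def]; abel
          rw [hrw, ← dist_eq_norm, inv_mul_eq_div]
          have hpa : S ≤ dist p a := hsep p hp a haj
          have hRS : R ≤ d + S := by rw [hR_def]; linarith
          gcongr
        have hsum : ‖Pv + Av‖ ≤ (2 - δ) * R := by
          have h6 : ‖R⁻¹ • Pv + R⁻¹ • Av‖ ≤ 2 - δ := hballδ hu hv hsubv
          rw [← smul_add, norm_smul, Real.norm_eq_abs, abs_of_pos (inv_pos.2 hRpos),
            inv_mul_eq_div, div_le_iff₀ hRpos] at h6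
          linarith
        have hyp : dist y p = ‖Pv - t • Av‖ := by
          have hrw : Pv - t • Av = p - y := by
            simp [hy_def, hPv_def, hAv_def, sub_smul, smul_sub]; abel
          rw [hrw, ← dist_eq_norm, dist_comm]
        have hlow : (1+t) * r - t * ((2-δ) * R) ≤ ‖Pv - t • Av‖ := by
          have hrw : Pv - t • Av = (1+t) • Pv - t • (Pv + Av) := by
            simp [add_smul, smul_add]; abel
          rw [hrw]
          have h7 := norm_sub_norm_le ((1+t) • Pv) (t • (Pv + Av))
          rw [norm_smul, norm_smul, Real.norm_eq_abs, Real.norm_eq_abs,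
            abs_of_pos (by linarith : (0:ℝ) < 1+t), abs_of_pos ht0, hPn] at h7
          have h8 : t * ‖Pv + Av‖ ≤ t * ((2-δ) * R) := mul_le_mul_of_nonneg_left hsum ht0.le
          linarith
        rw [hyp]
        have hfin : (1-t) * (d + ε) ≤ (1+t) * r - t * ((2-δ) * R) := by
          have er : (1+t) * d ≤ (1+t) * r := mul_le_mul_of_nonneg_left hr (by linarith)
          have e1 : t * t * d ≤ t * (δ/16) * d :=
            mul_le_mul_of_nonneg_right (mul_le_mul_of_nonneg_left ht_δ ht0.le) hd.le
          have e2 : t * t * ε ≤ t * t * d :=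
            mul_le_mul_of_nonneg_left hεd (by positivity)
          have e3 : (0:ℝ) ≤ t * t * (δ * d) := by positivity
          have e4 : (0:ℝ) ≤ t * t * (δ * ε) := by positivity
          have e6 : 4 * ε = t * (δ * d) := by rw [hε_def]; ring
          rw [hR_def]
          linarith [er, e1, e2, e3, e4, htε0, e6, hεpos.le]
        linarith
    linarith


/-- Voronoi cells (boundary version): for finitely many (at least two) nonempty, pairwise
positively separated sites `(P k)` in a convex subset `X` of a uniformly convex real
normed space, a point `x ∈ X` is on the boundary (in the subspace topology on `X`) of the
Voronoi cell `R k = dom(P k, ⋃_{j ≠ k} P j)` iff `d(x, P k) ≤ d(x, P j)` for all `j ≠ k`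
with equality for at least one `j ≠ k`. -/
theorem mem_frontier_voronoi_cell_iff
    {E : Type*} [NormedAddCommGroup E] [NormedSpace ℝ E] [UniformConvexSpace E]
    (X : Set E) (hX : Convex ℝ X)
    {K : Type*} [Fintype K] [Nontrivial K]
    (P : K → Set E) (hPne : ∀ k, (P k).Nonempty) (hPX : ∀ k, P k ⊆ X)
    (hsep : ∀ j k : K, j ≠ k →
      0 < sInf {r : ℝ | ∃ p ∈ P j, ∃ a ∈ P k, r = dist p a})
    (k : K) (x : X) :
    x ∈ frontier {y : X |
        Metric.infDist (y : E) (P k) ≤ Metric.infDist (y : E) (⋃ j ∈ {j : K | j ≠ k}, P j)}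
      ↔ ((∀ j : K, j ≠ k → Metric.infDist (x : E) (P k) ≤ Metric.infDist (x : E) (P j)) ∧
          ∃ j : K, j ≠ k ∧ Metric.infDist (x : E) (P k) = Metric.infDist (x : E) (P j)) := by
  classical
  set U : Set E := ⋃ j ∈ {j : K | j ≠ k}, P j with hU_def
  obtain ⟨j₁, hj₁⟩ := exists_ne k
  have hUne : U.Nonempty := by
    obtain ⟨a, ha⟩ := hPne j₁
    exact ⟨a, Set.mem_biUnion hj₁ ha⟩
  have hgle : ∀ (z : E) (j : K), j ≠ k → infDist z U ≤ infDist z (P j) := fun z j hj =>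
    infDist_le_infDist_of_subset (Set.subset_biUnion_of_mem hj) (hPne j)
  have hmin : ∀ z : E, ∃ j : K, j ≠ k ∧ infDist z U = infDist z (P j) := by
    intro z
    obtain ⟨j₀, hj₀F, hj₀min⟩ := (Finset.univ.filter (· ≠ k)).exists_min_image
      (fun j => infDist z (P j)) ⟨j₁, by simp [hj₁]⟩
    have hj₀ : j₀ ≠ k := by simpa using hj₀F
    refine ⟨j₀, hj₀, le_antisymm (hgle z j₀ hj₀) ?_⟩
    refine le_infDist_aux hUne fun u hu => ?_
    obtain ⟨j, hjk, hju⟩ : ∃ j, j ≠ k ∧ u ∈ P j := by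
      simpa [hU_def] using hu
    exact le_trans (hj₀min j (by simp [hjk])) (infDist_le_dist_of_mem hju)
  set s : Set X := {y : X | infDist (y : E) (P k) ≤ infDist (y : E) U} with hs_def
  have hcontk : Continuous fun y : X => infDist (y : E) (P k) :=
    (continuous_infDist_pt _).comp continuous_subtype_val
  have hcontU : Continuous fun y : X => infDist (y : E) U :=
    (continuous_infDist_pt _).comp continuous_subtype_val
  have hclosed : IsClosed s := isClosed_le hcontk hcontU
  have hfr : frontier s = s ∩ closure sᶜ := by
    rw [frontier_eq_closure_inter_closure, hclosed.closure_eq]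
  constructor
  · rintro hx
    rw [hfr] at hx
    obtain ⟨hx1, hx2⟩ := hx
    have hge : infDist (x : E) U ≤ infDist (x : E) (P k) := by
      have hsub : closure sᶜ ⊆ {y : X | infDist (y : E) U ≤ infDist (y : E) (P k)} := by
        refine closure_minimal ?_ (isClosed_le hcontU hcontk)
        intro y hy
        have hy' : ¬ (infDist (y : E) (P k) ≤ infDist (y : E) U) := hy
        exact (lt_of_not_ge hy').le
      exact hsub hx2
    have heq : infDist (x : E) (P k) = infDist (x : E) U := le_antisymm hx1 hge
    obtain ⟨j₀, hj₀, hj₀eq⟩ := hmin (x : E)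
    exact ⟨fun j hj => heq.le.trans (hgle _ j hj), ⟨j₀, hj₀, heq.trans hj₀eq⟩⟩
  · rintro ⟨hall, j, hjk, hjeq⟩
    rw [hfr]
    obtain ⟨j₀, hj₀, hj₀eq⟩ := hmin (x : E)
    have hmem : x ∈ s := by
      rw [hs_def, Set.mem_setOf_eq, hj₀eq]
      exact hall j₀ hj₀
    refine ⟨hmem, ?_⟩
    rw [Metric.mem_closure_iff]
    intro ε'' hε''
    set S := sInf {r : ℝ | ∃ p ∈ P k, ∃ a ∈ P j, r = dist p a} with hS_def
    have hS : 0 < S := hsep k j (Ne.symm hjk)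
    have hsepf : ∀ p ∈ P k, ∀ a ∈ P j, S ≤ dist p a := by
      intro p hp a ha
      refine csInf_le ⟨0, fun r hr => ?_⟩ ⟨p, hp, a, ha, rfl⟩
      obtain ⟨p', _, a', _, rfl⟩ := hr
      exact dist_nonneg
    obtain ⟨a, haj, t, ht0, ht1, hdist, hlt⟩ :=
      voronoi_key (P k) (P j) (hPne k) (hPne j) hS hsepf (x : E) hjeq hε''
    have hyX : (1-t) • (x : E) + t • a ∈ X :=
      hX x.2 (hPX j haj) (by linarith) ht0 (by ring)
    refine ⟨⟨_, hyX⟩, ?_, ?_⟩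
    · simp only [Set.mem_compl_iff, hs_def, Set.mem_setOf_eq, not_le]
      exact lt_of_le_of_lt (hgle _ j hjk) hlt
    · rw [Subtype.dist_eq]
      simpa [dist_comm] using hdist
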